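/- arXiv:1304.3033 — 3 statements merged into one kernel-verified Lean document; each statement's English description precedes it below -/
import Mathlib

section
/- Let C be a symmetric monoidal category and suppose the forgetful functor from commutative monoid objects in C to C is a split epimorphism in Cat, i.e., there exists a functor S : C ⥤ CommMon(C) such that S followed by the forgetful functor is the identity functor of C. Then the monoidal unit 𝟙 is an initial object of C. -/
/-!
A section `S` of the forgetful functor gives every object `X` a unit `u X : 𝟙_ C ⟶ X`, and
since `S` sends morphisms to monoid morphisms, `u X ≫ f = u Y` for every `f : X ⟶ Y`.
Applied to `f = u (𝟙_ C)` this makes `u (𝟙_ C)` idempotent; the left unit law of the monoid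
`S (𝟙_ C)` makes it split mono, so it is the identity. Hence every `f : 𝟙_ C ⟶ Y` equals
`u (𝟙_ C) ≫ f = u Y`.
-/

open CategoryTheory CategoryTheory.Limits CategoryTheory.MonoidalCategory

namespace CategoryTheory

open _root_.CategoryTheory.MonObj

variable {C : Type*} [Category C]

lemma eq_id_of_idempotent_of_mono {X : C} (f : X ⟶ X) [Mono f] (hf : f ≫ f = f) : f = 𝟙 X :=
  (cancel_mono f).1 (by rw [hf, Category.id_comp])

variable [MonoidalCategory C]

lemma isSplitMono_one_comp_hom_of_iso_unit {M : C} [MonObj M] (e : M ≅ 𝟙_ C) :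
    IsSplitMono (η[M] ≫ e.hom) :=
  IsSplitMono.mk' ⟨(ρ_ (𝟙_ C)).inv ≫ (e.inv ⊗ₘ e.inv) ≫ μ[M] ≫ e.hom, by
    rw [rightUnitor_inv_naturality_assoc, ← tensorHom_id, tensorHom_comp_tensorHom_assoc]
    simp [one_mul_hom_assoc, unitors_equal]⟩

noncomputable def Mon.isInitialUnitOfForgetSection (S : C ⥤ Mon C)
    (e : S ⋙ Mon.forget C ≅ 𝟭 C) : IsInitial (𝟙_ C) := by
  let u (X : C) : 𝟙_ C ⟶ X := η[(S.obj X).X] ≫ e.hom.app X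
  have comp_eq {X Y : C} (f : X ⟶ Y) : u X ≫ f = u Y :=
    calc u X ≫ f = η ≫ (S.map f).hom ≫ e.hom.app Y :=
          (Category.assoc _ _ _).trans (congrArg (η ≫ ·) (e.hom.naturality f).symm)
      _ = u Y := IsMonHom.one_hom_assoc _ _
  have : IsSplitMono (u (𝟙_ C)) :=
    isSplitMono_one_comp_hom_of_iso_unit (M := (S.obj (𝟙_ C)).X) (e.app _)
  have u_unit : u (𝟙_ C) = 𝟙 _ := eq_id_of_idempotent_of_mono _ (comp_eq _)
  exact IsInitial.ofUniqueHom u fun X f => by rw [← comp_eq f, u_unit, Category.id_comp]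

end CategoryTheory

/-- If the forgetful functor `CommMon_ C ⥤ C` from commutative monoid objects in a symmetric
monoidal category `C` admits a section (i.e. it is a split epimorphism in `Cat`), then the
monoidal unit `𝟙_ C` is an initial object of `C`. -/
theorem stmt2 {C : Type*} [Category C] [MonoidalCategory C] [SymmetricCategory C]
    (S : C ⥤ CommMon C)
    (hS : S ⋙ (CommMon.forget₂Mon C ⋙ Mon.forget C) = 𝟭 C) :
    Nonempty (IsInitial (𝟙_ C)) :=
  ⟨Mon.isInitialUnitOfForgetSection (S ⋙ CommMon.forget₂Mon C) (eqToIso hS)⟩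
end

section
/- For any symmetric monoidal category C, the category CommMon(C) of commutative monoid objects in C and monoid morphisms has finite coproducts. -/
/-!
The coproduct of commutative monoids `M` and `N` is `M ⊗ N`, with injections `m ↦ m ⊗ 1` and
`n ↦ 1 ⊗ n`. The copairing of `f : M ⟶ P` and `g : N ⟶ P` is `(f ⊗ g) ≫ μ`, a monoid morphism
because multiplication of a commutative monoid is one; it is the only one since
`m ⊗ n = (m ⊗ 1) * (1 ⊗ n)`. The initial commutative monoid is the unit `𝟙_ C`.
-/

open CategoryTheory CategoryTheory.Limits

namespace CategoryTheory

open MonoidalCategory CategoryTheory.MonObj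

universe v u

namespace MonObj

section Monoidal

variable {C : Type u} [Category.{v} C] [MonoidalCategory C]

instance isMonHom_one (M : C) [MonObj M] : IsMonHom η[M] where
  mul_hom := by simp [unitors_equal]

def tensorInl (M N : C) [MonObj N] : M ⟶ M ⊗ N := (ρ_ M).inv ≫ M ◁ η[N]

def tensorInr (M N : C) [MonObj M] : N ⟶ M ⊗ N := (λ_ N).inv ≫ η[M] ▷ N

variable {M N P : C} [MonObj P]

theorem tensorInl_tensorHom_mul [MonObj N] (f : M ⟶ P) (g : N ⟶ P) (hg : η[N] ≫ g = η[P]) :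
    tensorInl M N ≫ (f ⊗ₘ g) ≫ μ[P] = f := by
  rw [tensorInl, Category.assoc, ← id_tensorHom, tensorHom_comp_tensorHom_assoc, hg,
    Category.id_comp, mul_one_hom, Iso.inv_hom_id_assoc]

theorem tensorInr_tensorHom_mul [MonObj M] (f : M ⟶ P) (g : N ⟶ P) (hf : η[M] ≫ f = η[P]) :
    tensorInr M N ≫ (f ⊗ₘ g) ≫ μ[P] = g := by
  rw [tensorInr, Category.assoc, ← tensorHom_id, tensorHom_comp_tensorHom_assoc, hf,
    Category.id_comp, one_mul_hom, Iso.inv_hom_id_assoc]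

end Monoidal

section Braided

variable {C : Type u} [Category.{v} C] [MonoidalCategory C] [BraidedCategory C]

instance isMonHom_mul (M : C) [MonObj M] [IsCommMonObj M] : IsMonHom μ[M] where
  one_hom := by rw [tensorObj.one_def, Category.assoc, one_mul_hom, Iso.inv_hom_id_assoc]
  mul_hom := by rw [tensorObj.mul_def, Category.assoc, MonObj.mul_mul_mul_comm]

variable (M N : C) [MonObj M] [MonObj N]

instance : IsMonHom (tensorInl M N) := by unfold tensorInl; infer_instance

instance : IsMonHom (tensorInr M N) := by unfold tensorInr; infer_instance

theorem tensorInl_tensorHom_tensorInr_mul :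
    (tensorInl M N ⊗ₘ tensorInr M N) ≫ μ[M ⊗ N] = 𝟙 (M ⊗ N) := by
  rw [tensorObj.mul_def, tensorInl, tensorInr, ← tensorHom_comp_tensorHom, Category.assoc,
    ← id_tensorHom, ← tensorHom_id, tensorμ_natural_assoc, tensorHom_comp_tensorHom]
  -- the unit laws leave a coherence identity whose only braiding is `β_ (𝟙_ C) (𝟙_ C)`
  simp only [id_tensorHom, tensorHom_id, MonObj.mul_one, MonObj.one_mul, tensorμ,
    braiding_tensorUnit_right]
  monoidal

variable {M N}

theorem eq_tensorHom_mul_of_isMonHom {P : C} [MonObj P] (m : M ⊗ N ⟶ P) [hm : IsMonHom m] :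
    m = ((tensorInl M N ≫ m) ⊗ₘ (tensorInr M N ≫ m)) ≫ μ[P] := by
  rw [← tensorHom_comp_tensorHom_assoc, ← IsMonHom.mul_hom,
    reassoc_of% tensorInl_tensorHom_tensorInr_mul]

end Braided

end MonObj

def Mon.mulHom {C : Type u} [Category.{v} C] [MonoidalCategory C] [BraidedCategory C]
    (M : Mon C) [IsCommMonObj M.X] : M ⊗ M ⟶ M :=
  ⟨μ[M.X]⟩

namespace CommMon

variable {C : Type u} [Category.{v} C] [MonoidalCategory C] [SymmetricCategory C]

instance (M : CommMon C) : IsCommMonObj M.toMon.X := M.comm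

abbrev tensorObj (M N : CommMon C) : CommMon C := ⟨M.X ⊗ N.X⟩

def inl (M N : CommMon C) : M ⟶ tensorObj M N := homMk (Mon.ofHom (tensorInl M.X N.X))

def inr (M N : CommMon C) : N ⟶ tensorObj M N := homMk (Mon.ofHom (tensorInr M.X N.X))

def desc {M N P : CommMon C} (f : M ⟶ P) (g : N ⟶ P) : tensorObj M N ⟶ P :=
  homMk ((f.hom ⊗ₘ g.hom) ≫ Mon.mulHom P.toMon)

def isColimitTensorObj (M N : CommMon C) :
    IsColimit (BinaryCofan.mk (inl M N) (inr M N)) :=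
  BinaryCofan.isColimitMk (fun s => desc s.inl s.inr)
    (fun s => by ext; exact tensorInl_tensorHom_mul _ _ s.inr.hom.isMonHom_hom.one_hom)
    (fun s => by ext; exact tensorInr_tensorHom_mul _ _ s.inl.hom.isMonHom_hom.one_hom)
    (fun s m h₁ h₂ => by
      ext
      rw [eq_tensorHom_mul_of_isMonHom m.hom.hom (hm := m.hom.isMonHom_hom), ← h₁, ← h₂]
      rfl)

instance : HasBinaryCoproducts (CommMon C) :=
  @hasBinaryCoproducts_of_hasColimit_pair _ _ fun {M N} =>
    HasColimit.mk ⟨_, isColimitTensorObj M N⟩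

end CommMon

end CategoryTheory

/-- Fox's theorem: the category of commutative monoid objects in a symmetric monoidal category
has finite coproducts. -/
theorem stmt5 (C : Type*) [Category C] [MonoidalCategory C] [SymmetricCategory C] :
    HasFiniteCoproducts (CommMon C) :=
  hasFiniteCoproducts_of_has_binary_and_initial
end

section
/- Let C be a category with finite products and finite coproducts. Suppose there exist an isomorphism between the initial object 0 and the terminal object 1 of C, and a natural isomorphism between the two bifunctors C × C → C given by (X, Y) ↦ X ⊔ Y and (X, Y) ↦ X × Y. Then for all objects X and Y the canonical comparison morphism X ⊔ Y → X × Y — whose components are ⟨id_X, 0⟩ : X → X × Y and ⟨0, id_Y⟩ : Y → X × Y, where 0 denotes the zero morphisms arising from the zero object — is an isomorphism; in particular C has binary biproducts. -/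
open CategoryTheory CategoryTheory.Limits

variable {C : Type*} [Category C] [HasFiniteProducts C] [HasFiniteCoproducts C]

/-- The zero morphism `X ⟶ Y` arising from an isomorphism between the initial and the terminal
object (which makes them a zero object): `X ⟶ 1 ≅ 0 ⟶ Y`. -/
noncomputable def zeroMor (i : (⊥_ C) ≅ (⊤_ C)) (X Y : C) : X ⟶ Y :=
  terminal.from X ≫ i.inv ≫ initial.to Y

/-- The zero-morphism structure on `C` arising from an isomorphism between the initial and the
terminal object. -/
noncomputable def zeroMorphismsOfInitialIsoTerminal (i : (⊥_ C) ≅ (⊤_ C)) :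
    HasZeroMorphisms C where
  zero X Y := ⟨zeroMor i X Y⟩
  comp_zero {X Y} f Z := by
    show f ≫ zeroMor i Y Z = zeroMor i X Z
    rw [zeroMor, zeroMor, ← Category.assoc, terminal.comp_from]
  zero_comp X {Y Z} f := by
    show zeroMor i X Y ≫ f = zeroMor i X Z
    rw [zeroMor, zeroMor, Category.assoc, Category.assoc, initial.to_comp]

/-!
The isomorphism `⊥_ C ≅ ⊤_ C` provides zero morphisms, and in their presence the initial object
is a zero object. Read a component `φ X Y : X ⨿ Y ≅ X ⨯ Y` of the natural isomorphism as a
2 × 2 matrix. Naturality along `⊥_ C ⟶ Y` shows that the entry `X ⟶ Y` factors through `⊥_ C`,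
hence vanishes, and that the entry `X ⟶ X` is the one of `φ X ⊥`, an isomorphism since
`X ≅ X ⨿ ⊥ ≅ X ⨯ ⊥ ≅ X`; symmetrically for the other row. Hence `φ X Y` is the canonical
comparison map followed by an invertible diagonal matrix.
-/

section MatrixEntries

variable (φ : ∀ X Y : C, X ⨿ Y ⟶ X ⨯ Y)

theorem inl_comp_fst_eq_of_natural_right
    (natural_right : ∀ (X : C) {Y Y' : C} (g : Y ⟶ Y'),
      coprod.map (𝟙 X) g ≫ φ X Y' = φ X Y ≫ prod.map (𝟙 X) g) (X Y : C) :
    coprod.inl ≫ φ X Y ≫ prod.fst = coprod.inl ≫ φ X (⊥_ C) ≫ prod.fst := by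
  simpa using coprod.inl ≫= natural_right X (initial.to Y) =≫ prod.fst

theorem inr_comp_snd_eq_of_natural_left
    (natural_left : ∀ {X X' : C} (f : X ⟶ X') (Y : C),
      coprod.map f (𝟙 Y) ≫ φ X' Y = φ X Y ≫ prod.map f (𝟙 Y)) (X Y : C) :
    coprod.inr ≫ φ X Y ≫ prod.snd = coprod.inr ≫ φ (⊥_ C) Y ≫ prod.snd := by
  simpa using coprod.inr ≫= natural_left (initial.to X) Y =≫ prod.snd

variable [HasZeroMorphisms C]

theorem inl_comp_snd_eq_zero_of_natural_right
    (natural_right : ∀ (X : C) {Y Y' : C} (g : Y ⟶ Y'),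
      coprod.map (𝟙 X) g ≫ φ X Y' = φ X Y ≫ prod.map (𝟙 X) g) (X Y : C) :
    coprod.inl ≫ φ X Y ≫ prod.snd = 0 := by
  have h := coprod.inl ≫= natural_right X (initial.to Y) =≫ prod.snd
  simp only [coprod.inl_map_assoc, Category.id_comp, Category.assoc, prod.map_snd] at h
  rw [h, initialIsInitial.isZero.eq_zero_of_tgt (prod.snd : X ⨯ ⊥_ C ⟶ _)]
  simp

theorem inr_comp_fst_eq_zero_of_natural_left
    (natural_left : ∀ {X X' : C} (f : X ⟶ X') (Y : C),
      coprod.map f (𝟙 Y) ≫ φ X' Y = φ X Y ≫ prod.map f (𝟙 Y)) (X Y : C) :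
    coprod.inr ≫ φ X Y ≫ prod.fst = 0 := by
  have h := coprod.inr ≫= natural_left (initial.to X) Y =≫ prod.fst
  simp only [coprod.inr_map_assoc, Category.id_comp, Category.assoc, prod.map_fst] at h
  rw [h, initialIsInitial.isZero.eq_zero_of_tgt (prod.fst : (⊥_ C) ⨯ Y ⟶ _)]
  simp

end MatrixEntries

instance isIso_coprod_inl_bot (X : C) : IsIso (coprod.inl : X ⟶ X ⨿ ⊥_ C) :=
  (BinaryCofan.isColimit_iff_isIso_inl initialIsInitial
    (BinaryCofan.mk coprod.inl coprod.inr)).mp ⟨coprodIsCoprod X _⟩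

instance isIso_coprod_inr_bot (Y : C) : IsIso (coprod.inr : Y ⟶ (⊥_ C) ⨿ Y) :=
  (BinaryCofan.isColimit_iff_isIso_inr initialIsInitial
    (BinaryCofan.mk coprod.inl coprod.inr)).mp ⟨coprodIsCoprod _ Y⟩

section Comparison

variable [HasZeroMorphisms C]

instance isIso_prod_fst_bot (X : C) : IsIso (prod.fst : X ⨯ ⊥_ C ⟶ X) :=
  (BinaryFan.isLimit_iff_isIso_fst initialIsInitial.isZero.isTerminal
    (BinaryFan.mk prod.fst prod.snd)).mp ⟨prodIsProd X _⟩

instance isIso_prod_snd_bot (Y : C) : IsIso (prod.snd : (⊥_ C) ⨯ Y ⟶ Y) :=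
  (BinaryFan.isLimit_iff_isIso_snd initialIsInitial.isZero.isTerminal
    (BinaryFan.mk prod.fst prod.snd)).mp ⟨prodIsProd _ Y⟩

noncomputable def coprodToProd (X Y : C) : X ⨿ Y ⟶ X ⨯ Y :=
  coprod.desc (prod.lift (𝟙 X) 0) (prod.lift 0 (𝟙 Y))

theorem coprodToProd_comp_prod_map {X Y : C} (f : X ⨿ Y ⟶ X ⨯ Y)
    (inl_snd : coprod.inl ≫ f ≫ prod.snd = 0) (inr_fst : coprod.inr ≫ f ≫ prod.fst = 0) :
    coprodToProd X Y ≫ prod.map (coprod.inl ≫ f ≫ prod.fst) (coprod.inr ≫ f ≫ prod.snd) = f := by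
  ext <;> simp only [coprodToProd, Category.assoc, prod.map_fst, prod.map_snd,
    coprod.inl_desc_assoc, coprod.inr_desc_assoc, prod.lift_fst_assoc, prod.lift_snd_assoc,
    Category.id_comp, zero_comp, inl_snd, inr_fst]

theorem isIso_coprodToProd_of_isIso {X Y : C} (f : X ⨿ Y ⟶ X ⨯ Y) [IsIso f]
    [IsIso (coprod.inl ≫ f ≫ prod.fst)] [IsIso (coprod.inr ≫ f ≫ prod.snd)]
    (inl_snd : coprod.inl ≫ f ≫ prod.snd = 0) (inr_fst : coprod.inr ≫ f ≫ prod.fst = 0) :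
    IsIso (coprodToProd X Y) := by
  rw [(IsIso.eq_comp_inv _).mpr (coprodToProd_comp_prod_map f inl_snd inr_fst)]
  infer_instance

theorem hasBinaryBiproduct_of_isIso_coprodToProd (X Y : C) [IsIso (coprodToProd X Y)] :
    HasBinaryBiproduct X Y :=
  HasBinaryBiproduct.mk
    { bicone :=
        { pt := X ⨯ Y
          fst := prod.fst
          snd := prod.snd
          inl := prod.lift (𝟙 X) 0
          inr := prod.lift 0 (𝟙 Y)
          inl_fst := prod.lift_fst _ _
          inl_snd := prod.lift_snd _ _
          inr_fst := prod.lift_fst _ _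
          inr_snd := prod.lift_snd _ _ }
      isBilimit :=
        { isLimit := prodIsProd X Y
          isColimit := (coprodIsCoprod X Y).ofIsoColimit <|
            BinaryCofan.ext (asIso (coprodToProd X Y) : X ⨿ Y ≅ X ⨯ Y) (coprod.inl_desc _ _)
              (coprod.inr_desc _ _) } }

theorem isIso_coprodToProd_of_natural (φ : ∀ X Y : C, X ⨿ Y ≅ X ⨯ Y)
    (natural_left : ∀ {X X' : C} (f : X ⟶ X') (Y : C),
      coprod.map f (𝟙 Y) ≫ (φ X' Y).hom = (φ X Y).hom ≫ prod.map f (𝟙 Y))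
    (natural_right : ∀ (X : C) {Y Y' : C} (g : Y ⟶ Y'),
      coprod.map (𝟙 X) g ≫ (φ X Y').hom = (φ X Y).hom ≫ prod.map (𝟙 X) g) (X Y : C) :
    IsIso (coprodToProd X Y) := by
  have : IsIso (coprod.inl ≫ (φ X Y).hom ≫ prod.fst) := by
    rw [inl_comp_fst_eq_of_natural_right _ natural_right]
    infer_instance
  have : IsIso (coprod.inr ≫ (φ X Y).hom ≫ prod.snd) := by
    rw [inr_comp_snd_eq_of_natural_left _ natural_left]
    infer_instance
  exact isIso_coprodToProd_of_isIso (φ X Y).hom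
    (inl_comp_snd_eq_zero_of_natural_right _ natural_right X Y)
    (inr_comp_fst_eq_zero_of_natural_left _ natural_left X Y)

theorem isIso_coprodToProd_of_iso (e : (coprod.functor : C ⥤ C ⥤ C) ≅ prod.functor) (X Y : C) :
    IsIso (coprodToProd X Y) :=
  isIso_coprodToProd_of_natural (fun X Y => (e.app X).app Y)
    (fun f Y => NatTrans.naturality_app e.hom Y f) (fun X _ _ g => (e.hom.app X).naturality g) X Y

end Comparison

/-- Lack's "non-canonical isomorphisms" result: if a category `C` with finite products and
finite coproducts admits some isomorphism `⊥_ C ≅ ⊤_ C` and some natural isomorphism between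
the coproduct and product bifunctors, then for all `X Y` the canonical comparison morphism
`X ⨿ Y ⟶ X ⨯ Y` (with components `⟨𝟙 X, 0⟩` and `⟨0, 𝟙 Y⟩`) is an isomorphism; in particular
`C` has binary biproducts. -/
theorem stmt6 (i : (⊥_ C) ≅ (⊤_ C)) (ni : (coprod.functor : C ⥤ C ⥤ C) ≅ prod.functor) :
    (∀ X Y : C,
      IsIso (coprod.desc (prod.lift (𝟙 X) (zeroMor i X Y)) (prod.lift (zeroMor i Y X) (𝟙 Y)))) ∧
    @HasBinaryBiproducts C _ (zeroMorphismsOfInitialIsoTerminal i) := by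
  let := zeroMorphismsOfInitialIsoTerminal i
  have comparison_isIso := isIso_coprodToProd_of_iso ni
  exact ⟨comparison_isIso, ⟨fun X Y => hasBinaryBiproduct_of_isIso_coprodToProd X Y⟩⟩
end
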